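/- arXiv:0911.3792 — 5 statements merged into one kernel-verified Lean document; each statement's English description precedes it below -/
import Mathlib

section
/- Let G be the group of order 2^10 generated by a, b, c with relations: α = [c,b], β = [c,a], γ = [b,a] are central of order 2, a² = α, b⁸ = c⁸ = 1. Then the center of G contains α, β, γ, b², c², every element of G can be written as aⁱ bʲ cᵏ z with z central, and z⁴ = 1 for every central element z. -/
/-
The three commutators `α, β, γ` are central, so conjugating by a generator `t` sends `y ^ m`
to `y ^ m * [y,t] ^ m`. Pushing generators to the right with this rule writes every element
as `a ^ i * b ^ j * c ^ k * w` with `w` in the elementary abelian group `⟨α, β, γ⟩`, and shows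
that `b ^ 2` and `c ^ 2` are central. If `a ^ i * b ^ j * c ^ k` is central, conjugating it by
`a` gives `γ ^ j * β ^ k = 1`; in `D₄ × D₄`, via `a ↦ (s, s)`, `b ↦ (r, 1)`, `c ↦ (1, r)`, this
forces `j` and `k` to be even. A central element is then a product of the commuting factors
`a ^ i`, `(b ^ 2) ^ j'`, `(c ^ 2) ^ k'`, `w`, whose fourth powers are trivial since
`a ^ 4 = α ^ 2 = 1`, `b ^ 8 = c ^ 8 = 1` and `w ^ 2 = 1`.
-/

namespace Stmt2

/-- The commutator `[x,y] = x⁻¹y⁻¹xy` (the convention used in the paper). -/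
def pc {H : Type*} [Group H] (x y : H) : H := x⁻¹ * y⁻¹ * x * y

def a : FreeGroup (Fin 3) := .of 0
def b : FreeGroup (Fin 3) := .of 1
def c : FreeGroup (Fin 3) := .of 2

/-- Relations of the group `G` of order `2^10`: `α = [c,b]`, `β = [c,a]`, `γ = [b,a]`
are central of order 2, `a² = α`, `b⁸ = c⁸ = 1`. -/
def rels : Set (FreeGroup (Fin 3)) :=
  { pc (pc b a) a, pc (pc b a) b, pc (pc b a) c,
    pc (pc c a) a, pc (pc c a) b, pc (pc c a) c,
    pc (pc c b) a, pc (pc c b) b, pc (pc c b) c,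
    (pc b a) ^ 2, (pc c a) ^ 2, (pc c b) ^ 2,
    a ^ 2 * (pc c b)⁻¹, b ^ 8, c ^ 8 }

/-- The group `G` of order `2^10`. -/
abbrev G10 := PresentedGroup rels

/-- The canonical projection. -/
def π : FreeGroup (Fin 3) →* G10 := PresentedGroup.mk rels

open Subgroup

section Commutator

variable {H : Type*} [Group H]

lemma pc_eq_one_iff {x y : H} : pc x y = 1 ↔ Commute x y := by
  rw [pc, mul_assoc, mul_assoc, inv_mul_eq_one, eq_inv_mul_iff_mul_eq]
  exact eq_comm

lemma pc_inv (x y : H) : (pc x y)⁻¹ = pc y x := by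
  simp only [pc]; group

lemma map_pc {K : Type*} [Group K] (f : H →* K) (x y : H) : f (pc x y) = pc (f x) (f y) := by
  simp only [pc, map_mul, map_inv]

lemma conj_zpow_of_pc_mem_center {y t : H} (h : pc y t ∈ center H) (m : ℤ) :
    t⁻¹ * y ^ m * t = y ^ m * pc y t ^ m := by
  have hconj : t⁻¹ * y * t = y * pc y t := by simp only [pc]; group
  rw [← (h.comm y).symm.mul_zpow, ← hconj]
  simpa using (conj_zpow (a := t⁻¹) (b := y) (i := m)).symm

lemma pc_inv_right {y t : H} (h : pc y t ∈ center H) : pc y t⁻¹ = (pc y t)⁻¹ := by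
  rw [show pc y t⁻¹ = t * (pc y t)⁻¹ * t⁻¹ by simp only [pc]; group,
    mem_center_iff.mp (inv_mem h) t, mul_inv_cancel_right]

lemma commute_sq_of_pc_mem_center {y t : H} (h : pc y t ∈ center H) (h2 : pc y t ^ 2 = 1) :
    Commute t (y ^ 2) := by
  have := conj_zpow_of_pc_mem_center h 2
  rw [zpow_ofNat, zpow_ofNat, h2, mul_one, mul_assoc, inv_mul_eq_iff_eq_mul] at this
  exact this.symm

lemma conj_zpow_mul_zpow_mul_zpow {x y z t : H} (hxt : Commute x t) (hy : pc y t ∈ center H)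
    (hz : pc z t ∈ center H) (i j k : ℤ) :
    t⁻¹ * (x ^ i * y ^ j * z ^ k) * t = x ^ i * y ^ j * z ^ k * (pc y t ^ j * pc z t ^ k) := by
  have hx : t⁻¹ * x ^ i * t = x ^ i := by
    rw [mul_assoc, (hxt.zpow_left i).eq, inv_mul_cancel_left]
  have hY : Commute (pc y t ^ j) (z ^ k) := (zpow_mem hy j).comm _
  calc t⁻¹ * (x ^ i * y ^ j * z ^ k) * t
      = (t⁻¹ * x ^ i * t) * (t⁻¹ * y ^ j * t) * (t⁻¹ * z ^ k * t) := by group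
    _ = x ^ i * (y ^ j * pc y t ^ j) * (z ^ k * pc z t ^ k) := by
      rw [hx, conj_zpow_of_pc_mem_center hy, conj_zpow_of_pc_mem_center hz]
    _ = x ^ i * y ^ j * z ^ k * (pc y t ^ j * pc z t ^ k) := by
      simp only [mul_assoc, hY.left_comm]

lemma zpow_pow_eq_one {x : H} {n : ℕ} (h : x ^ n = 1) (i : ℤ) : (x ^ i) ^ n = 1 := by
  rw [← zpow_natCast, zpow_comm, zpow_natCast, h, one_zpow]

lemma sq_eq_one_of_mem_closure {s : Set H} (hs : s ⊆ center H) (hs2 : ∀ x ∈ s, x ^ 2 = 1)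
    {w : H} (hw : w ∈ closure s) : w ^ 2 = 1 := by
  induction hw using closure_induction with
  | mem x hx => exact hs2 x hx
  | one => exact one_pow 2
  | mul x y hx hy hx2 hy2 =>
    rw [((closure_le _ |>.mpr hs hy).comm x).symm.mul_pow, hx2, hy2, mul_one]
  | inv x _ hx2 => rw [inv_pow, hx2, inv_one]

end Commutator

section NormalForm

variable {H : Type*} [Group H] (x y z : H) (E : Subgroup H)

def normalForms : Set H := {g | ∃ i j k : ℤ, ∃ w ∈ E, g = x ^ i * y ^ j * z ^ k * w}

variable {x y z E}

lemma mul_mem_normalForms_of_mem_zpowers_left (hE : E ≤ center H) {g t : H} (ht : t ∈ zpowers x)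
    (hyt : pc y t ∈ E) (hzt : pc z t ∈ E) (hg : g ∈ normalForms x y z E) :
    g * t ∈ normalForms x y z E := by
  obtain ⟨n, rfl⟩ := mem_zpowers_iff.mp ht
  obtain ⟨i, j, k, w, hw, rfl⟩ := hg
  refine ⟨n + i, j, k, pc y (x ^ n) ^ j * pc z (x ^ n) ^ k * w,
    mul_mem (mul_mem (zpow_mem hyt j) (zpow_mem hzt k)) hw, ?_⟩
  have hconj := conj_zpow_mul_zpow_mul_zpow ((Commute.refl x).zpow_right n) (hE hyt) (hE hzt) i j k
  calc x ^ i * y ^ j * z ^ k * w * x ^ n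
      = x ^ n * ((x ^ n)⁻¹ * (x ^ i * y ^ j * z ^ k) * x ^ n) * w := by
        rw [mul_assoc _ w, ((hE hw).comm _).eq]; group
    _ = x ^ (n + i) * y ^ j * z ^ k * (pc y (x ^ n) ^ j * pc z (x ^ n) ^ k * w) := by
        rw [hconj, zpow_add]; group

lemma mul_mem_normalForms_of_mem_zpowers_middle (hE : E ≤ center H) {g t : H}
    (ht : t ∈ zpowers y) (hzt : pc z t ∈ E) (hg : g ∈ normalForms x y z E) :
    g * t ∈ normalForms x y z E := by
  obtain ⟨n, rfl⟩ := mem_zpowers_iff.mp ht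
  obtain ⟨i, j, k, w, hw, rfl⟩ := hg
  refine ⟨i, j + n, k, pc z (y ^ n) ^ k * w, mul_mem (zpow_mem hzt k) hw, ?_⟩
  calc x ^ i * y ^ j * z ^ k * w * y ^ n
      = x ^ i * y ^ j * y ^ n * ((y ^ n)⁻¹ * z ^ k * y ^ n) * w := by
        rw [mul_assoc _ w, ((hE hw).comm _).eq]; group
    _ = x ^ i * y ^ (j + n) * z ^ k * (pc z (y ^ n) ^ k * w) := by
        rw [conj_zpow_of_pc_mem_center (hE hzt), zpow_add]; group

lemma mul_mem_normalForms_of_mem_zpowers_right (hE : E ≤ center H) {g t : H}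
    (ht : t ∈ zpowers z) (hg : g ∈ normalForms x y z E) :
    g * t ∈ normalForms x y z E := by
  obtain ⟨n, rfl⟩ := mem_zpowers_iff.mp ht
  obtain ⟨i, j, k, w, hw, rfl⟩ := hg
  refine ⟨i, j, k + n, w, hw, ?_⟩
  rw [mul_assoc _ w, ((hE hw).comm _).eq, zpow_add]
  group

lemma normalForms_eq_univ (hE : E ≤ center H) (hyx : pc y x ∈ E) (hzx : pc z x ∈ E)
    (hzy : pc z y ∈ E) (hgen : closure {x, y, z} = ⊤) : normalForms x y z E = Set.univ := by
  refine Set.eq_univ_of_forall fun g => ?_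
  induction hgen ▸ mem_top g using closure_induction_right with
  | one => exact ⟨0, 0, 0, 1, one_mem E, by simp⟩
  | mul_right g _ s hs ih =>
    rcases hs with rfl | rfl | rfl
    · exact mul_mem_normalForms_of_mem_zpowers_left hE (mem_zpowers s) hyx hzx ih
    · exact mul_mem_normalForms_of_mem_zpowers_middle hE (mem_zpowers s) hzy ih
    · exact mul_mem_normalForms_of_mem_zpowers_right hE (mem_zpowers s) ih
  | mul_inv_cancel g _ s hs ih =>
    rcases hs with rfl | rfl | rfl
    · refine mul_mem_normalForms_of_mem_zpowers_left hE (inv_mem (mem_zpowers s)) ?_ ?_ ih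
      · rw [pc_inv_right (hE hyx)]; exact inv_mem hyx
      · rw [pc_inv_right (hE hzx)]; exact inv_mem hzx
    · refine mul_mem_normalForms_of_mem_zpowers_middle hE (inv_mem (mem_zpowers s)) ?_ ih
      rw [pc_inv_right (hE hzy)]; exact inv_mem hzy
    · exact mul_mem_normalForms_of_mem_zpowers_right hE (inv_mem (mem_zpowers s)) ih

end NormalForm

lemma π_eq_one_of_mem_rels {w : FreeGroup (Fin 3)} (h : w ∈ rels) : π w = 1 :=
  (QuotientGroup.eq_one_iff w).mpr (subset_normalClosure h)

lemma closure_π_generators : closure {π a, π b, π c} = ⊤ := by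
  rw [← PresentedGroup.closure_range_of rels]
  congr
  ext g
  simp [Fin.exists_fin_succ, π, a, b, c, PresentedGroup.of, eq_comm]

lemma mem_center_G10_iff {g : G10} :
    g ∈ center G10 ↔ Commute g (π a) ∧ Commute g (π b) ∧ Commute g (π c) := by
  simp [center_eq_iInf closure_π_generators, mem_centralizer_singleton_iff, Commute, SemiconjBy]

lemma commute_π_of_pc_mem_rels {v w : FreeGroup (Fin 3)} (h : pc v w ∈ rels) :
    Commute (π v) (π w) :=
  pc_eq_one_iff.mp (map_pc π v w ▸ π_eq_one_of_mem_rels h)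

lemma π_mem_center_of_pc_mem_rels {w : FreeGroup (Fin 3)} (ha : pc w a ∈ rels)
    (hb : pc w b ∈ rels) (hc : pc w c ∈ rels) : π w ∈ center G10 :=
  mem_center_G10_iff.mpr
    ⟨commute_π_of_pc_mem_rels ha, commute_π_of_pc_mem_rels hb, commute_π_of_pc_mem_rels hc⟩

lemma π_pc_c_b_mem_center : π (pc c b) ∈ center G10 :=
  π_mem_center_of_pc_mem_rels (by simp [rels]) (by simp [rels]) (by simp [rels])

lemma π_pc_c_a_mem_center : π (pc c a) ∈ center G10 :=
  π_mem_center_of_pc_mem_rels (by simp [rels]) (by simp [rels]) (by simp [rels])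

lemma π_pc_b_a_mem_center : π (pc b a) ∈ center G10 :=
  π_mem_center_of_pc_mem_rels (by simp [rels]) (by simp [rels]) (by simp [rels])

lemma π_pow_eq_one_of_mem_rels {w : FreeGroup (Fin 3)} {n : ℕ} (h : w ^ n ∈ rels) :
    π w ^ n = 1 :=
  map_pow π w n ▸ π_eq_one_of_mem_rels h

lemma π_a_sq : π a ^ 2 = π (pc c b) := by
  have h := π_eq_one_of_mem_rels (show a ^ 2 * (pc c b)⁻¹ ∈ rels by simp [rels])
  rwa [map_mul, map_inv, map_pow, mul_inv_eq_one] at h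

lemma π_pc_c_b_sq : π (pc c b) ^ 2 = 1 := π_pow_eq_one_of_mem_rels (by simp [rels])

lemma π_pc_c_a_sq : π (pc c a) ^ 2 = 1 := π_pow_eq_one_of_mem_rels (by simp [rels])

lemma π_pc_b_a_sq : π (pc b a) ^ 2 = 1 := π_pow_eq_one_of_mem_rels (by simp [rels])

lemma commute_π_sq_of_π_pc {v w : FreeGroup (Fin 3)} (h : π (pc v w) ∈ center G10)
    (h2 : π (pc v w) ^ 2 = 1) : Commute (π v ^ 2) (π w) := by
  rw [map_pc] at h h2
  exact (commute_sq_of_pc_mem_center h h2).symm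

lemma π_b_sq_mem_center : π b ^ 2 ∈ center G10 := by
  refine mem_center_G10_iff.mpr ⟨commute_π_sq_of_π_pc π_pc_b_a_mem_center π_pc_b_a_sq,
    (Commute.refl _).pow_left 2, commute_π_sq_of_π_pc ?_ ?_⟩
  · rw [← pc_inv, map_inv]; exact inv_mem π_pc_c_b_mem_center
  · rw [← pc_inv, map_inv, inv_pow, π_pc_c_b_sq, inv_one]

lemma π_c_sq_mem_center : π c ^ 2 ∈ center G10 :=
  mem_center_G10_iff.mpr ⟨commute_π_sq_of_π_pc π_pc_c_a_mem_center π_pc_c_a_sq,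
    commute_π_sq_of_π_pc π_pc_c_b_mem_center π_pc_c_b_sq, (Commute.refl _).pow_left 2⟩

def pcClosure : Subgroup G10 := closure {π (pc c b), π (pc c a), π (pc b a)}

lemma pcClosure_le_center : pcClosure ≤ center G10 := by
  rw [pcClosure, closure_le]
  rintro _ (rfl | rfl | rfl)
  exacts [π_pc_c_b_mem_center, π_pc_c_a_mem_center, π_pc_b_a_mem_center]

lemma sq_eq_one_of_mem_pcClosure {w : G10} (hw : w ∈ pcClosure) : w ^ 2 = 1 := by
  refine sq_eq_one_of_mem_closure (fun _ h => pcClosure_le_center (subset_closure h)) ?_ hw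
  rintro _ (rfl | rfl | rfl)
  exacts [π_pc_c_b_sq, π_pc_c_a_sq, π_pc_b_a_sq]

lemma normalForms_G10_eq_univ : normalForms (π a) (π b) (π c) pcClosure = Set.univ := by
  refine normalForms_eq_univ pcClosure_le_center ?_ ?_ ?_ closure_π_generators <;>
    rw [← map_pc] <;> exact subset_closure (by simp)

open DihedralGroup in
def dihedralImages : Fin 3 → DihedralGroup 4 × DihedralGroup 4 :=
  ![(sr 0, sr 0), (r 1, 1), (1, r 1)]

lemma lift_dihedralImages_eq_one : ∀ w ∈ rels, FreeGroup.lift dihedralImages w = 1 := by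
  simp only [rels, Set.mem_insert_iff, Set.mem_singleton_iff]
  rintro _ (rfl|rfl|rfl|rfl|rfl|rfl|rfl|rfl|rfl|rfl|rfl|rfl|rfl|rfl|rfl) <;>
    simp only [pc, a, b, c, map_mul, map_inv, map_pow, FreeGroup.lift_apply_of] <;> decide

def toDihedral : G10 →* DihedralGroup 4 × DihedralGroup 4 :=
  PresentedGroup.toGroup lift_dihedralImages_eq_one

open DihedralGroup in
lemma two_dvd_of_π_pc_zpow_mul_π_pc_zpow_eq_one {j k : ℤ}
    (h : π (pc b a) ^ j * π (pc c a) ^ k = 1) : 2 ∣ j ∧ 2 ∣ k := by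
  have hγ : toDihedral (π (pc b a)) = (r 2, 1) := by decide
  have hβ : toDihedral (π (pc c a)) = (1, r 2) := by decide
  have hr : orderOf (r 2 : DihedralGroup 4) = 2 := orderOf_eq_prime (by decide) (by decide)
  have h' := congrArg toDihedral h
  rw [map_mul, map_zpow, map_zpow, hγ, hβ, map_one] at h'
  have h1 : (r 2 : DihedralGroup 4) ^ j * 1 ^ k = 1 := congrArg Prod.fst h'
  have h2 : (1 : DihedralGroup 4) ^ j * r 2 ^ k = 1 := congrArg Prod.snd h'
  rw [one_zpow, mul_one] at h1
  rw [one_zpow, one_mul] at h2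
  exact ⟨by exact_mod_cast hr ▸ orderOf_dvd_iff_zpow_eq_one.mpr h1,
    by exact_mod_cast hr ▸ orderOf_dvd_iff_zpow_eq_one.mpr h2⟩

lemma two_dvd_of_zpow_mul_zpow_mul_zpow_mem_center {i j k : ℤ}
    (hu : π a ^ i * π b ^ j * π c ^ k ∈ center G10) : 2 ∣ j ∧ 2 ∣ k := by
  have hconj := conj_zpow_mul_zpow_mul_zpow (Commute.refl (π a))
    (map_pc π b a ▸ π_pc_b_a_mem_center) (map_pc π c a ▸ π_pc_c_a_mem_center) i j k
  rw [mul_assoc, (hu.comm _).eq, inv_mul_cancel_left, ← map_pc, ← map_pc] at hconj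
  exact two_dvd_of_π_pc_zpow_mul_π_pc_zpow_eq_one (left_eq_mul.mp hconj)

lemma pow_four_eq_one_of_mem_center {g : G10} (hg : g ∈ center G10) : g ^ 4 = 1 := by
  obtain ⟨i, j, k, w, hw, rfl⟩ : g ∈ normalForms (π a) (π b) (π c) pcClosure :=
    normalForms_G10_eq_univ ▸ Set.mem_univ g
  have hwc := pcClosure_le_center hw
  obtain ⟨⟨j, rfl⟩, ⟨k, rfl⟩⟩ := two_dvd_of_zpow_mul_zpow_mul_zpow_mem_center
    (by simpa using mul_mem hg (inv_mem hwc))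
  have ha4 : π a ^ 4 = 1 := by rw [show 4 = 2 * 2 from rfl, pow_mul, π_a_sq, π_pc_c_b_sq]
  have hb4 : (π b ^ 2) ^ 4 = 1 := by
    rw [← pow_mul]; exact π_pow_eq_one_of_mem_rels (by simp [rels])
  have hc4 : (π c ^ 2) ^ 4 = 1 := by
    rw [← pow_mul]; exact π_pow_eq_one_of_mem_rels (by simp [rels])
  have hw4 : w ^ 4 = 1 := by
    rw [show 4 = 2 * 2 from rfl, pow_mul, sq_eq_one_of_mem_pcClosure hw, one_pow]
  have hb := zpow_mem π_b_sq_mem_center j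
  have hc := zpow_mem π_c_sq_mem_center k
  rw [zpow_mul, zpow_mul, zpow_ofNat, zpow_ofNat, (hwc.comm _).symm.mul_pow,
    (hc.comm _).symm.mul_pow, (hb.comm _).symm.mul_pow, zpow_pow_eq_one ha4,
    zpow_pow_eq_one hb4, zpow_pow_eq_one hc4, hw4, one_mul, one_mul, one_mul]

/-- In the group `G` of order `2^10` above: the center contains `α, β, γ, b², c²`;
every element of `G` has the form `aⁱbʲcᵏz` with `z` central; and `z⁴ = 1` for every
central element `z`. -/
theorem stmt_2 :
    (π (pc c b) ∈ Subgroup.center G10 ∧ π (pc c a) ∈ Subgroup.center G10 ∧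
      π (pc b a) ∈ Subgroup.center G10 ∧ π (b ^ 2) ∈ Subgroup.center G10 ∧
      π (c ^ 2) ∈ Subgroup.center G10) ∧
    (∀ g : G10, ∃ (i j k : ℤ), ∃ z ∈ Subgroup.center G10,
      g = (π a) ^ i * (π b) ^ j * (π c) ^ k * z) ∧
    (∀ z ∈ Subgroup.center G10, z ^ 4 = 1) := by
  refine ⟨⟨π_pc_c_b_mem_center, π_pc_c_a_mem_center, π_pc_b_a_mem_center,
    (map_pow π b 2).symm ▸ π_b_sq_mem_center, (map_pow π c 2).symm ▸ π_c_sq_mem_center⟩,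
    fun g => ?_, fun _ => pow_four_eq_one_of_mem_center⟩
  obtain ⟨i, j, k, w, hw, hg⟩ : g ∈ normalForms (π a) (π b) (π c) pcClosure :=
    normalForms_G10_eq_univ ▸ Set.mem_univ g
  exact ⟨i, j, k, w, pcClosure_le_center hw, hg⟩

end Stmt2
end

section
/- Let p ≡ 1 (mod 4) be prime and let G = (ℤ/pℤ)³. For any homomorphism φ : G → Aut(G) = GL₃(𝔽_p), the semidirect product G ⋉_φ G cannot be generated by fewer than 4 elements; more precisely, the Frattini quotient of G ⋉_φ G has 𝔽_p-dimension at least 4. -/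
/-!
Write `V = 𝔽_p³`. The image of `φ` is a `p`-group acting linearly on `V`, hence also on the dual
space `V*`, whose cardinality is divisible by `p`; so it fixes a nonzero functional `ℓ`, i.e. `ker ℓ`
is a `φ`-invariant hyperplane. Then `(v, g) ↦ (ℓ v, g)` is a surjective homomorphism from `V ⋊[φ] V`
onto the elementary abelian group `𝔽_p × V` of rank 4. Generators map to a spanning set, so there
are at least 4 of them; and an `𝔽_p`-vector space has trivial Frattini subgroup, so the Frattini
subgroup of `V ⋊[φ] V` lies in the kernel and the Frattini quotient has at least `p⁴` elements.
-/

open Multiplicative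

theorem isPGroup_multiplicative {p : ℕ} [Fact p.Prime] {V : Type*} [AddCommGroup V]
    [Module (ZMod p) V] : IsPGroup p (Multiplicative V) := fun v =>
  ⟨1, by
    rw [pow_one, ← ofAdd_toAdd v, ← ofAdd_nsmul, ← Nat.cast_smul_eq_nsmul (ZMod p),
      ZMod.natCast_self, zero_smul, ofAdd_zero]⟩

namespace Representation

variable {p : ℕ} [Fact p.Prime] {G V : Type*} [Group G] [AddCommGroup V] [Module (ZMod p) V]
  [Finite V] [Nontrivial V]

theorem exists_ne_zero_forall_apply_eq (hG : IsPGroup p G) (ρ : Representation (ZMod p) G V) :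
    ∃ v : V, v ≠ 0 ∧ ∀ g, ρ g v = v := by
  let := MulAction.compHom V ρ
  have hpV : p ∣ Nat.card V :=
    (isPGroup_multiplicative (V := V)).card_eq_or_dvd.resolve_left Finite.one_lt_card.ne'
  obtain ⟨v, hv, hv0⟩ := hG.exists_fixed_point_of_prime_dvd_card_of_fixed_point V hpV
    (a := 0) fun g => map_zero (ρ g)
  exact ⟨v, hv0.symm, hv⟩

theorem exists_dual_ne_zero_forall_comp_eq (hG : IsPGroup p G)
    (ρ : Representation (ZMod p) G V) :
    ∃ ℓ : Module.Dual (ZMod p) V, ℓ ≠ 0 ∧ ∀ g, ℓ ∘ₗ ρ g = ℓ := by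
  have : Module.Finite (ZMod p) V := Module.Finite.of_finite
  have : Finite (Module.Dual (ZMod p) V) := Module.finite_of_finite (ZMod p)
  obtain ⟨ℓ, hℓ, hfix⟩ := exists_ne_zero_forall_apply_eq hG ρ.dual
  exact ⟨ℓ, hℓ, fun g => by simpa [Module.Dual.transpose_apply] using hfix g⁻¹⟩

def ofMulAut (n : ℕ) {H V : Type*} [Group H] [AddCommGroup V] [Module (ZMod n) V]
    (φ : H →* MulAut (Multiplicative V)) : Representation (ZMod n) H V where
  toFun h := (AddMonoidHom.toMultiplicative.symm (φ h).toMonoidHom).toZModLinearMap n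
  map_one' := by ext; simp
  map_mul' g h := by ext; simp

end Representation

theorem SemidirectProduct.exists_surjective_of_invariant {N H A W : Type*} [Group N] [Group H]
    [AddCommGroup A] [AddCommGroup W] {φ : H →* MulAut N} (fn : N →* Multiplicative A)
    (hfn : Function.Surjective fn) (hinv : ∀ h n, fn (φ h n) = fn n)
    (fg : H →* Multiplicative W) (hfg : Function.Surjective fg) :
    ∃ f : N ⋊[φ] H →* Multiplicative (A × W), Function.Surjective f := by
  let inlA := AddMonoidHom.toMultiplicative (AddMonoidHom.inl A W)
  let inrW := AddMonoidHom.toMultiplicative (AddMonoidHom.inr A W)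
  refine ⟨lift (inlA.comp fn) (inrW.comp fg) fun h => ?_, fun aw => ?_⟩
  · ext n <;> simp [inlA, inrW, hinv]
  · obtain ⟨n, hn⟩ := hfn (ofAdd aw.toAdd.1)
    obtain ⟨h, hh⟩ := hfg (ofAdd aw.toAdd.2)
    refine ⟨inl n * inr h, ?_⟩
    simp [inlA, inrW, hn, hh, ← ofAdd_add]

section

variable {G W : Type*} [Group G] [AddCommGroup W]

theorem finrank_le_card_of_closure_eq_top (K : Type*) [DivisionRing K] [Module K W]
    {f : G →* Multiplicative W} (hf : Function.Surjective f) {S : Finset G}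
    (hS : Subgroup.closure (S : Set G) = ⊤) : Module.finrank K W ≤ S.card := by
  classical
  let T := S.image fun x => (f x).toAdd
  have hspan : Submodule.span K (T : Set W) = ⊤ := by
    have hclosure : ∀ x ∈ Subgroup.closure (S : Set G),
        (f x).toAdd ∈ Submodule.span K (T : Set W) := by
      intro x hx
      induction hx using Subgroup.closure_induction with
      | mem x hx => exact Submodule.subset_span (Finset.mem_image_of_mem _ hx)
      | one => simp
      | mul x y _ _ hx hy => simpa only [map_mul, toAdd_mul] using add_mem hx hy
      | inv x _ hx => simpa only [map_inv, toAdd_inv] using neg_mem hx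
    refine Submodule.eq_top_iff'.mpr fun w => ?_
    obtain ⟨x, hx⟩ := hf (ofAdd w)
    simpa [hx] using hclosure x (hS ▸ Subgroup.mem_top x)
  calc Module.finrank K W = (T : Set W).finrank K := by
        rw [Set.finrank, hspan, finrank_top]
    _ ≤ T.card := finrank_span_finset_le_card T
    _ ≤ S.card := Finset.card_image_le

theorem MonoidHom.isCoatom_ker_of_surjective {H : Type*} [CommGroup H] [IsSimpleGroup H]
    {f : G →* H} (hf : Function.Surjective f) : IsCoatom f.ker :=
  Subgroup.isCoatom_comap_of_surjective hf isCoatom_bot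

theorem frattini_multiplicative_eq_bot (p : ℕ) [Fact p.Prime] [Module (ZMod p) W] :
    frattini (Multiplicative W) = ⊥ := by
  refine eq_bot_iff.mpr fun w hw => Subgroup.mem_bot.mpr ?_
  by_contra hw1
  obtain ⟨ℓ, hℓ⟩ := Module.Projective.exists_dual_ne_zero (ZMod p) (toAdd_eq_zero.not.mpr hw1)
  let π := AddMonoidHom.toMultiplicative ℓ.toAddMonoidHom
  have : IsSimpleGroup (Multiplicative (ZMod p)) := isSimpleGroup_of_prime_card (Nat.card_zmod p)
  have hπ : Function.Surjective π := LinearMap.surjective (f := ℓ) (by rintro rfl; exact hℓ rfl)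
  exact hℓ (congrArg toAdd (frattini_le_coatom (MonoidHom.isCoatom_ker_of_surjective hπ) hw))

theorem frattini_le_ker (p : ℕ) [Fact p.Prime] [Module (ZMod p) W] {f : G →* Multiplicative W}
    (hf : Function.Surjective f) : frattini G ≤ f.ker := by
  simpa [frattini_multiplicative_eq_bot p] using frattini_le_comap_frattini_of_surjective hf

theorem natCard_le_natCard_quotient_frattini (p : ℕ) [Fact p.Prime] [Module (ZMod p) W]
    [Finite G] {f : G →* Multiplicative W} (hf : Function.Surjective f) :
    Nat.card W ≤ Nat.card (G ⧸ frattini G) :=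
  Nat.card_le_card_of_surjective (QuotientGroup.lift _ f (frattini_le_ker p hf))
    (QuotientGroup.lift_surjective_of_surjective _ _ hf _)

end

theorem stmt_7_general (p : ℕ) (hp : p.Prime)
    (φ : Multiplicative (Fin 3 → ZMod p) →* MulAut (Multiplicative (Fin 3 → ZMod p))) :
    (∀ S : Finset (Multiplicative (Fin 3 → ZMod p) ⋊[φ] Multiplicative (Fin 3 → ZMod p)),
        Subgroup.closure
          (S : Set (Multiplicative (Fin 3 → ZMod p) ⋊[φ] Multiplicative (Fin 3 → ZMod p))) = ⊤ →
          4 ≤ S.card) ∧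
      p ^ 4 ≤ Nat.card
        ((Multiplicative (Fin 3 → ZMod p) ⋊[φ] Multiplicative (Fin 3 → ZMod p)) ⧸
          frattini (Multiplicative (Fin 3 → ZMod p) ⋊[φ] Multiplicative (Fin 3 → ZMod p))) := by
  have := Fact.mk hp
  obtain ⟨ℓ, hℓ, hinv⟩ := (Representation.ofMulAut p φ).exists_dual_ne_zero_forall_comp_eq
    isPGroup_multiplicative
  obtain ⟨f, hf⟩ := SemidirectProduct.exists_surjective_of_invariant
    (AddMonoidHom.toMultiplicative ℓ.toAddMonoidHom) (LinearMap.surjective (f := ℓ) hℓ)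
    (fun h n => congrArg ofAdd (LinearMap.congr_fun (hinv h) (toAdd n)))
    (MonoidHom.id _) Function.surjective_id
  refine ⟨fun S hS => ?_, ?_⟩
  · calc 4 = Module.finrank (ZMod p) (ZMod p × (Fin 3 → ZMod p)) := by simp
      _ ≤ S.card := finrank_le_card_of_closure_eq_top (ZMod p) hf hS
  · have : Finite (Multiplicative (Fin 3 → ZMod p) ⋊[φ] Multiplicative (Fin 3 → ZMod p)) :=
      Finite.of_equiv _ SemidirectProduct.equivProd.symm
    calc p ^ 4 = Nat.card (ZMod p × (Fin 3 → ZMod p)) := by simp; ring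
      _ ≤ _ := natCard_le_natCard_quotient_frattini p hf

/-- Let `p ≡ 1 (mod 4)` be prime and `G = (ℤ/pℤ)³`. For any homomorphism
`φ : G → Aut(G)`, the semidirect product `G ⋊[φ] G` cannot be generated by fewer than
4 elements; more precisely, its Frattini quotient has `𝔽_p`-dimension at least 4
(equivalently, cardinality at least `p⁴`). -/
theorem stmt_7 (p : ℕ) (hp : p.Prime) (hmod : p % 4 = 1)
    (φ : Multiplicative (Fin 3 → ZMod p) →* MulAut (Multiplicative (Fin 3 → ZMod p))) :
    (∀ S : Finset (Multiplicative (Fin 3 → ZMod p) ⋊[φ] Multiplicative (Fin 3 → ZMod p)),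
        Subgroup.closure
          (S : Set (Multiplicative (Fin 3 → ZMod p) ⋊[φ] Multiplicative (Fin 3 → ZMod p))) = ⊤ →
          4 ≤ S.card) ∧
      p ^ 4 ≤ Nat.card
        ((Multiplicative (Fin 3 → ZMod p) ⋊[φ] Multiplicative (Fin 3 → ZMod p)) ⧸
          frattini (Multiplicative (Fin 3 → ZMod p) ⋊[φ] Multiplicative (Fin 3 → ZMod p))) :=
  stmt_7_general p hp φ
end

section
/- Let p and q be primes with q ≡ 1 (mod p), and let D = ⟨σ, τ ∣ στσ⁻¹ = τ^{q^f}⟩ and D_k = ⟨σ_k, τ_k ∣ σ_kτ_kσ_k⁻¹ = τ_k^q⟩ be profinite groups (here τ, τ_k topologically generate copies of the prime-to-p part of ẑ, and σ, σ_k generate copies of ẑ), with f a power of p. Then there is a continuous epimorphism from the free profinite product D ∗ ℤ_p onto D_k. -/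
/-!
Take `s' = s ^ p ^ e`, `t' = t` and for `x'` the `p`-part `s ^ ordCompl[p] (orderOf s)` of `s`.
Conjugating by `s ^ p ^ e` raises `t` to the power `q ^ p ^ e`, and since `p ^ e` is coprime to
the prime-to-`p` part of the order of `s`, the two powers `s ^ p ^ e` and `x'` of `s` already
generate `s` (Bézout).
-/

section

variable {G : Type*} [Group G]

theorem conj_pow_eq_pow_pow_of_conj_eq_pow {s t : G} {q : ℕ} (h : s * t * s⁻¹ = t ^ q) (n : ℕ) :
    s ^ n * t * (s ^ n)⁻¹ = t ^ q ^ n := by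
  induction n with
  | zero => simp
  | succ n ih =>
    calc s ^ (n + 1) * t * (s ^ (n + 1))⁻¹ = s * (s ^ n * t * (s ^ n)⁻¹) * s⁻¹ := by group
      _ = (s * t * s⁻¹) ^ q ^ n := by rw [ih, conj_pow]
      _ = t ^ q ^ (n + 1) := by rw [h, ← pow_mul, pow_succ']

theorem mem_closure_pow_pair_of_coprime (g : G) {a b : ℕ} (h : a.Coprime b) :
    g ∈ Subgroup.closure {g ^ a, g ^ b} := by
  have bezout : (a : ℤ) * a.gcdA b + b * a.gcdB b = 1 := by
    rw [← Nat.gcd_eq_gcd_ab, h, Nat.cast_one]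
  have hg : (g ^ a) ^ a.gcdA b * (g ^ b) ^ a.gcdB b = g := by
    rw [← zpow_natCast, ← zpow_natCast, ← zpow_mul, ← zpow_mul, ← zpow_add, bezout, zpow_one]
  have hmem : (g ^ a) ^ a.gcdA b * (g ^ b) ^ a.gcdB b ∈ Subgroup.closure {g ^ a, g ^ b} :=
    mul_mem (zpow_mem (Subgroup.subset_closure (by simp)) _)
      (zpow_mem (Subgroup.subset_closure (by simp)) _)
  rwa [hg] at hmem

theorem orderOf_pow_ordCompl (g : G) (p : ℕ) (hg : IsOfFinOrder g) :
    orderOf (g ^ ordCompl[p] (orderOf g)) = p ^ (orderOf g).factorization p := by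
  have hn : orderOf g ≠ 0 := hg.orderOf_pos.ne'
  rw [orderOf_pow_of_dvd (Nat.ordCompl_pos p hn).ne' (Nat.ordCompl_dvd _ p),
    Nat.div_div_self (Nat.ordProj_dvd _ p) hn]

end

theorem stmt_14_general (p q : ℕ) (hp : p.Prime) (e : ℕ)
    (Q : Type*) [Group Q] [Finite Q] (s t : Q)
    (hgen : Subgroup.closure {s, t} = ⊤)
    (hrel : s * t * s⁻¹ = t ^ q)
    (hord : ¬ p ∣ orderOf t) :
    ∃ s' t' x' : Q,
      Subgroup.closure {s', t', x'} = ⊤ ∧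
      s' * t' * s'⁻¹ = t' ^ (q ^ (p ^ e)) ∧
      ¬ p ∣ orderOf t' ∧
      ∃ m : ℕ, orderOf x' = p ^ m := by
  set m := ordCompl[p] (orderOf s)
  have hcop : (p ^ e).Coprime m :=
    (Nat.coprime_ordCompl hp (orderOf_pos s).ne').pow_left e
  refine ⟨s ^ p ^ e, t, s ^ m, ?_, conj_pow_eq_pow_pow_of_conj_eq_pow hrel _, hord, _,
    orderOf_pow_ordCompl s p (isOfFinOrder_of_finite s)⟩
  have hs : s ∈ Subgroup.closure {s ^ p ^ e, t, s ^ m} :=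
    Subgroup.closure_mono (Set.insert_subset_insert (Set.subset_insert _ _))
      (mem_closure_pow_pair_of_coprime s hcop)
  rw [eq_top_iff, ← hgen, Subgroup.closure_le, Set.insert_subset_iff, Set.singleton_subset_iff]
  exact ⟨hs, Subgroup.subset_closure (by simp)⟩

/-- Finite-quotient form of: there is a continuous epimorphism from the free profinite
product `D ∗ ℤ_p` onto `D_k`, where `D = ⟨σ,τ ∣ στσ⁻¹ = τ^{q^f}⟩` and
`D_k = ⟨σ_k,τ_k ∣ σ_kτ_kσ_k⁻¹ = τ_k^q⟩` (with `τ, τ_k` topologically generating the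
prime-to-`p` part of `ẑ` and `σ, σ_k` generating `ẑ`), `f = p^e` a power of `p`, and
`q ≡ 1 (mod p)`.  Concretely: every finite quotient of `D_k` (generators `s, t` with
`sts⁻¹ = t^q` and `t` of prime-to-`p` order) admits compatible generators coming from
`D ∗ ℤ_p`: elements `s', t', x'` generating it, with `s't's'⁻¹ = t'^{q^{p^e}}`, the order
of `t'` prime to `p`, and the order of `x'` a power of `p`. -/
theorem stmt_14 (p q : ℕ) (hp : p.Prime) (hq : q.Prime) (hmod : q ≡ 1 [MOD p]) (e : ℕ)
    (Q : Type*) [Group Q] [Finite Q] (s t : Q)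
    (hgen : Subgroup.closure {s, t} = ⊤)
    (hrel : s * t * s⁻¹ = t ^ q)
    (hord : ¬ p ∣ orderOf t) :
    ∃ s' t' x' : Q,
      Subgroup.closure {s', t', x'} = ⊤ ∧
      s' * t' * s'⁻¹ = t' ^ (q ^ (p ^ e)) ∧
      ¬ p ∣ orderOf t' ∧
      ∃ m : ℕ, orderOf x' = p ^ m :=
  stmt_14_general p q hp e Q s t hgen hrel hord
end

section
/- Let M/K be a finite extension of number fields, G a finite group, and suppose there is a G-crossed product K-division algebra D₀ such that D = D₀ ⊗_K M is also a G-crossed product division algebra (condition (9)). Then there exist a maximal subfield L₀ of D₀ which is a Galois G-extension of K with L₀ ∩ M = K, and L = L₀M is a maximal subfield of D (condition (5)). Conversely condition (5) implies condition (9). -/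
/-!
An embedding `L₀ →ₐ[K] D₀` base-changes, `M` being flat over `K`, to an injection
`M ⊗ L₀ → M ⊗ D₀`; so when `M ⊗ D₀` is a domain, `M ⊗ L₀` is a domain finite-dimensional over `M`,
hence a field, of degree `[L₀ : K]` over `M`. Conversely, when `M ⊗ L₀` is a field, `σ ↦ id ⊗ σ`
embeds `Gal(L₀/K)` into `Aut_M(M ⊗ L₀)`, whose order is at most `[M ⊗ L₀ : M] = [L₀ : K]`; so the
embedding is an isomorphism and `M ⊗ L₀` is a Galois `G`-extension of `M`.
-/

open scoped TensorProduct

/-- A Galois `G`-extension of `F`: a finite Galois field extension `L/F` together with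
an identification `Gal(L/F) ≅ G`. -/
structure GalGExt (F : Type) [Field F] (G : Type) [Group G] : Type 1 where
  L : Type
  [fieldL : Field L]
  [algL : Algebra F L]
  findim : FiniteDimensional F L
  galois : IsGalois F L
  galG : (L ≃ₐ[F] L) ≃* G

attribute [instance] GalGExt.fieldL GalGExt.algL

/-- `D` is a `G`-crossed product algebra over `F`: it has a (strictly) maximal subfield
which is a Galois `G`-extension of `F` (maximality expressed by `dim_F D = [L:F]²`). -/
def IsGCrossedProduct (F : Type) [Field F] (G : Type) [Group G]
    (D : Type) [Ring D] [Algebra F D] : Prop :=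
  ∃ W : GalGExt F G, Nonempty (W.L →ₐ[F] D) ∧
    Module.finrank F D = Module.finrank F W.L * Module.finrank F W.L

open Algebra.TensorProduct

section BaseChange

variable {K M L : Type*} [Field K] [Field M] [Algebra K M] [Field L] [Algebra K L]

theorem isField_tensorProduct_of_algHom {D : Type*} [Ring D] [Algebra K D] [Nontrivial D]
    [IsDomain (M ⊗[K] D)] [FiniteDimensional K L] (f : L →ₐ[K] D) : IsField (M ⊗[K] L) := by
  have hinj : Function.Injective (map (AlgHom.id M M) f) :=
    Module.Flat.lTensor_preserves_injective_linearMap (M := M) f.toLinearMap f.injective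
  have : IsDomain (M ⊗[K] L) := hinj.isDomain (map (AlgHom.id M M) f).toRingHom
  have : IsArtinianRing (M ⊗[K] L) := .of_finite M _
  exact IsArtinianRing.isField_of_isDomain _

variable (M) in
def baseChangeAut : Gal(L/K) →* Gal((M ⊗[K] L)/M) where
  toFun σ := congr .refl σ
  map_one' := congr_refl
  map_mul' σ τ := congr_trans .refl .refl τ σ

@[simp]
theorem baseChangeAut_tmul (σ : Gal(L/K)) (m : M) (l : L) :
    baseChangeAut M σ (m ⊗ₜ l) = m ⊗ₜ σ l :=
  rfl

theorem baseChangeAut_injective : Function.Injective (baseChangeAut (K := K) (L := L) M) := by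
  intro σ τ h
  ext l
  apply includeRight_injective (A := M) (algebraMap K M).injective
  simpa using DFunLike.congr_fun h (1 ⊗ₜ l)

variable [FiniteDimensional K L] [IsGalois K L]

theorem isGalois_tensorProduct (hE : IsField (M ⊗[K] L)) :
    letI := hE.toField; IsGalois M (M ⊗[K] L) := by
  let _ : Field (M ⊗[K] L) := hE.toField
  refine IsGalois.of_card_aut_eq_finrank _ _ (le_antisymm ?_ ?_)
  · rw [Nat.card_eq_fintype_card]
    exact AlgEquiv.card_le
  · calc Module.finrank M (M ⊗[K] L) = Module.finrank K L := Module.finrank_baseChange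
      _ = Nat.card Gal(L/K) := (IsGalois.card_aut_eq_finrank K L).symm
      _ ≤ _ := Nat.card_le_card_of_injective _ baseChangeAut_injective

theorem baseChangeAut_bijective (hE : IsField (M ⊗[K] L)) :
    Function.Bijective (baseChangeAut (K := K) (L := L) M) := by
  let _ : Field (M ⊗[K] L) := hE.toField
  have := isGalois_tensorProduct hE
  refine baseChangeAut_injective.bijective_of_nat_card_le ?_
  rw [IsGalois.card_aut_eq_finrank, IsGalois.card_aut_eq_finrank, Module.finrank_baseChange]

end BaseChange

noncomputable def GalGExt.baseChange {K G : Type} [Field K] [Group G] (W : GalGExt K G)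
    (M : Type) [Field M] [Algebra K M] (hW : IsField (M ⊗[K] W.L)) : GalGExt M G :=
  letI := hW.toField
  have := W.findim
  have := W.galois
  { L := M ⊗[K] W.L
    findim := inferInstance
    galois := isGalois_tensorProduct hW
    galG := (MulEquiv.ofBijective _ (baseChangeAut_bijective hW)).symm.trans W.galG }

theorem stmt_17_general (K M G D₀ : Type) [Field K] [Field M]
    [Algebra K M] [Group G]
    [DivisionRing D₀] [Algebra K D₀]
    (hcp : IsGCrossedProduct K G D₀) :
    (IsDomain (M ⊗[K] D₀) ∧ IsGCrossedProduct M G (M ⊗[K] D₀)) ↔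
      (IsDomain (M ⊗[K] D₀) ∧
        ∃ W : GalGExt K G,
          Nonempty (W.L →ₐ[K] D₀) ∧
          Module.finrank K D₀ = Module.finrank K W.L * Module.finrank K W.L ∧
          IsField (M ⊗[K] W.L) ∧
          Nonempty ((M ⊗[K] W.L) →ₐ[M] (M ⊗[K] D₀)) ∧
          Module.finrank M (M ⊗[K] D₀) =
            Module.finrank M (M ⊗[K] W.L) * Module.finrank M (M ⊗[K] W.L)) := by
  constructor
  · rintro ⟨hdom, -⟩
    obtain ⟨W, ⟨f⟩, hrank⟩ := hcp
    have := W.findim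
    refine ⟨hdom, W, ⟨f⟩, hrank, isField_tensorProduct_of_algHom f, ⟨map (AlgHom.id M M) f⟩, ?_⟩
    rw [Module.finrank_baseChange, Module.finrank_baseChange, hrank]
  · rintro ⟨hdom, W, -, -, hW, ⟨g⟩, hrank⟩
    exact ⟨hdom, W.baseChange M hW, ⟨g⟩, hrank⟩

/-- Condition (9) is equivalent to condition (5): let `M/K` be a finite extension of
number fields, `G` a finite group, and `D₀` a `G`-crossed product `K`-division algebra.
Then `D = M ⊗_K D₀` is a division algebra which is a `G`-crossed product over `M`
(condition (9)) if and only if `D` is a division algebra and there is a maximal subfield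
`L₀` of `D₀` which is a Galois `G`-extension of `K` with `L₀ ∩ M = K` (i.e. `M ⊗_K L₀`
is a field) such that `L = L₀M = M ⊗_K L₀` is a maximal subfield of `D` (condition (5)). -/
theorem stmt_17 (K M G D₀ : Type) [Field K] [NumberField K] [Field M] [NumberField M]
    [Algebra K M] [FiniteDimensional K M] [Group G] [Finite G]
    [DivisionRing D₀] [Algebra K D₀] [FiniteDimensional K D₀]
    (hcentral : Subalgebra.center K D₀ = ⊥)
    (hcp : IsGCrossedProduct K G D₀) :
    (IsDomain (M ⊗[K] D₀) ∧ IsGCrossedProduct M G (M ⊗[K] D₀)) ↔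
      (IsDomain (M ⊗[K] D₀) ∧
        ∃ W : GalGExt K G,
          Nonempty (W.L →ₐ[K] D₀) ∧
          Module.finrank K D₀ = Module.finrank K W.L * Module.finrank K W.L ∧
          IsField (M ⊗[K] W.L) ∧
          Nonempty ((M ⊗[K] W.L) →ₐ[M] (M ⊗[K] D₀)) ∧
          Module.finrank M (M ⊗[K] D₀) =
            Module.finrank M (M ⊗[K] W.L) * Module.finrank M (M ⊗[K] W.L)) :=
  stmt_17_general K M G D₀ hcp
end

section
/- Let p be an odd prime, and let G_k(p) = ⟨x₁,…,x_{n+1}⟩ (free pro-p of rank n+1) or ⟨x₁,…,x_{n+2} ∣ x₁^{p^{s₀}}[x₁,x₂]⋯[x_{n+1},x_{n+2}] = 1⟩ with s₀ > 0, and similarly G_l(p) with parameters nt (t ≥ 1 an integer) and s₀' ≥ s₀. If s₀' = 0 then s₀ = 0 and G_k(p) is a quotient of G_l(p) whenever nt ≥ n; if s₀' > 0 and t > 2, then G_k(p) is a quotient of G_l(p). -/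
/-! Sending every generator of even (0-based) index of the Demushkin group on `m + 2`
generators to `1` kills `x₀^{p^s}` and one entry of every commutator of the relator, so the
relator dies and the remaining generators map onto a free group of rank `m/2 + 1`. When `t > 2`
and `nt` is even this rank is at least `n + 2`, which is enough to map onto both `G_k(p)`
presentations; for free groups a lower rank is always a quotient of a higher one. -/

namespace Stmt19

/-- The commutator `[x,y] = x⁻¹y⁻¹xy` (the convention used in the paper). -/
def pc {H : Type*} [Group H] (x y : H) : H := x⁻¹ * y⁻¹ * x * y

/-- The Demushkin relator `x₁^{p^s}[x₁,x₂]⋯[x_{m+1},x_{m+2}]` on `m + 2` generators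
(written with 0-based indices). -/
def drel (p s m : ℕ) : FreeGroup (Fin (m + 2)) :=
  FreeGroup.of 0 ^ p ^ s *
    ((List.range (m / 2 + 1)).map fun j =>
      pc (FreeGroup.of (Fin.ofNat (m + 2) (2 * j : ℕ)))
         (FreeGroup.of (Fin.ofNat (m + 2) (2 * j + 1 : ℕ)))).prod

theorem map_pc {G H : Type*} [Group G] [Group H] (f : G →* H) (x y : G) :
    f (pc x y) = pc (f x) (f y) := by
  simp only [pc, map_mul, map_inv]

theorem pc_one_left {H : Type*} [Group H] (y : H) : pc 1 y = 1 := by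
  simp [pc]

theorem _root_.FreeGroup.lift_surjective_of_range_of_subset {α β : Type*}
    {f : α → FreeGroup β} (h : Set.range FreeGroup.of ⊆ Set.range f) :
    Function.Surjective (FreeGroup.lift f) := by
  rw [← MonoidHom.range_eq_top, FreeGroup.range_lift_eq_closure, eq_top_iff,
    ← FreeGroup.closure_range_of]
  exact Subgroup.closure_mono h

theorem _root_.PresentedGroup.toGroup_surjective {α G : Type*} [Group G] {f : α → G}
    {rels : Set (FreeGroup α)} (h : ∀ r ∈ rels, FreeGroup.lift f r = 1)
    (hf : Function.Surjective (FreeGroup.lift f)) :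
    Function.Surjective (PresentedGroup.toGroup h) :=
  Function.Surjective.of_comp (g := PresentedGroup.mk rels) hf

theorem exists_surjective_freeGroup_fin {m r : ℕ} (hr : 0 < r) (h : r ≤ m) :
    ∃ f : FreeGroup (Fin m) →* FreeGroup (Fin r), Function.Surjective f :=
  have : Nonempty (Fin r) := ⟨⟨0, hr⟩⟩
  ⟨FreeGroup.map (Function.invFun (Fin.castLE h)),
    FreeGroup.map_surjective (Function.invFun_surjective (Fin.castLE_injective h))⟩

/-- With 0-based indices, the generators killed are the paper's `x₁, x₃, …, x_{m+1}`. -/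
def killEvenGenerators (m : ℕ) (i : Fin (m + 2)) : FreeGroup (Fin (m / 2 + 1)) :=
  if h : i.val % 2 = 0 then 1 else FreeGroup.of ⟨i.val / 2, by omega⟩

theorem killEvenGenerators_of_even {m : ℕ} {i : Fin (m + 2)} (h : i.val % 2 = 0) :
    killEvenGenerators m i = 1 :=
  dif_pos h

theorem killEvenGenerators_odd {m : ℕ} (j : Fin (m / 2 + 1)) :
    killEvenGenerators m ⟨2 * j.val + 1, by omega⟩ = FreeGroup.of j := by
  rw [killEvenGenerators, dif_neg (by simp only; omega)]
  congr
  show (2 * j.val + 1) / 2 = j.val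
  omega

theorem lift_killEvenGenerators_drel (p s m : ℕ) :
    FreeGroup.lift (killEvenGenerators m) (drel p s m) = 1 := by
  have hval (j : ℕ) (hj : j < m / 2 + 1) : (Fin.ofNat (m + 2) (2 * j)).val = 2 * j := by
    rw [Fin.val_ofNat]
    exact Nat.mod_eq_of_lt (by omega)
  rw [drel, map_mul, map_pow, FreeGroup.lift_apply_of,
    killEvenGenerators_of_even rfl, one_pow, one_mul, map_list_prod]
  refine List.prod_eq_one fun y hy => ?_
  obtain ⟨_, hx, rfl⟩ := List.mem_map.mp hy
  obtain ⟨j, hj, rfl⟩ := List.mem_map.mp hx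
  rw [map_pc, FreeGroup.lift_apply_of,
    killEvenGenerators_of_even (by rw [hval j (List.mem_range.mp hj)]; omega), pc_one_left]

def demushkinToFree (p s m : ℕ) : PresentedGroup {drel p s m} →* FreeGroup (Fin (m / 2 + 1)) :=
  PresentedGroup.toGroup fun _ h => h ▸ lift_killEvenGenerators_drel p s m

theorem demushkinToFree_surjective (p s m : ℕ) : Function.Surjective (demushkinToFree p s m) := by
  refine PresentedGroup.toGroup_surjective _
    (FreeGroup.lift_surjective_of_range_of_subset ?_)
  rintro _ ⟨j, rfl⟩
  exact ⟨_, killEvenGenerators_odd j⟩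

theorem exists_surjective_demushkin_freeGroup (p s : ℕ) {m r : ℕ} (hr : 0 < r)
    (h : r ≤ m / 2 + 1) :
    ∃ f : PresentedGroup {drel p s m} →* FreeGroup (Fin r), Function.Surjective f :=
  have ⟨f, hf⟩ := exists_surjective_freeGroup_fin hr h
  ⟨f.comp (demushkinToFree p s m), hf.comp (demushkinToFree_surjective p s m)⟩

theorem add_two_le_mul_div_two_add_one {n t : ℕ} (hn : 1 ≤ n) (ht : 2 < t)
    (heven : Even (n * t)) : n + 2 ≤ n * t / 2 + 1 := by
  obtain ⟨k, hk⟩ := heven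
  have : 3 * n ≤ n * t := by nlinarith
  omega

theorem stmt_19_general (p n t s₀ s₀' : ℕ) (hn : 1 ≤ n) (hle : s₀ ≤ s₀') :
    (s₀' = 0 → s₀ = 0 ∧
      (n ≤ n * t →
        ∃ f : FreeGroup (Fin (n * t + 1)) →* FreeGroup (Fin (n + 1)),
          Function.Surjective f)) ∧
    (0 < s₀' → Even (n * t) → 2 < t →
      ((s₀ = 0 →
          ∃ f : PresentedGroup {drel p s₀' (n * t)} →* FreeGroup (Fin (n + 1)),
            Function.Surjective f) ∧
       (0 < s₀ →
          ∃ f : PresentedGroup {drel p s₀' (n * t)} →* PresentedGroup {drel p s₀ n},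
            Function.Surjective f))) := by
  constructor
  · intro hs₀'
    exact ⟨by omega, fun hnt => exists_surjective_freeGroup_fin n.succ_pos (by omega)⟩
  · intro _ heven ht
    have hrank := add_two_le_mul_div_two_add_one hn ht heven
    refine ⟨fun _ => exists_surjective_demushkin_freeGroup p s₀' n.succ_pos (by omega),
      fun _ => ?_⟩
    obtain ⟨f, hf⟩ := exists_surjective_demushkin_freeGroup p s₀' (n + 1).succ_pos hrank
    exact ⟨(PresentedGroup.mk _).comp f, (PresentedGroup.mk_surjective _).comp hf⟩

/-- Let `p` be an odd prime, and let `G_k(p)` be the free (pro-`p`) group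
`⟨x₁,…,x_{n+1}⟩` if `s₀ = 0`, or `⟨x₁,…,x_{n+2} ∣ x₁^{p^{s₀}}[x₁,x₂]⋯[x_{n+1},x_{n+2}]⟩`
if `s₀ > 0`; similarly `G_l(p)` with parameters `nt` and `s₀' ≥ s₀`. If `s₀' = 0` then
`s₀ = 0` and `G_k(p)` is a quotient of `G_l(p)` whenever `nt ≥ n`; if `s₀' > 0` (so `nt`
is even) and `t > 2`, then `G_k(p)` is a quotient of `G_l(p)`. -/
theorem stmt_19 (p n t s₀ s₀' : ℕ) (hp : p.Prime) (hodd : Odd p) (hn : 1 ≤ n)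
    (ht : 1 ≤ t) (hle : s₀ ≤ s₀') :
    (s₀' = 0 → s₀ = 0 ∧
      (n ≤ n * t →
        ∃ f : FreeGroup (Fin (n * t + 1)) →* FreeGroup (Fin (n + 1)),
          Function.Surjective f)) ∧
    (0 < s₀' → Even (n * t) → 2 < t →
      ((s₀ = 0 →
          ∃ f : PresentedGroup {drel p s₀' (n * t)} →* FreeGroup (Fin (n + 1)),
            Function.Surjective f) ∧
       (0 < s₀ →
          ∃ f : PresentedGroup {drel p s₀' (n * t)} →* PresentedGroup {drel p s₀ n},
            Function.Surjective f))) :=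
  stmt_19_general p n t s₀ s₀' hn hle

end Stmt19
end
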